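/- Let Q be a nonzero prime ideal of T not containing w, and let P = Q ∩ T*, where T* denotes the image of ℂ[X,Y,Z] in T. Then Q ∩ ι(Q) = P·T, the ideal of T generated by P. -/

import Mathlib

/-!
Every element of `T` is `a + b w` with `a, b ∈ T*`, and `ι(a + b w) = a - b w`. If both
`t = a + b w` and `ι t` lie in `Q`, then so do `a = (t + ι t)/2` and `b w = (t - ι t)/2`, and
`b ∈ Q` because `Q` is prime and `w ∉ Q`; hence `t ∈ P·T`. Conversely `P` is fixed by `ι`.
-/

noncomputable section

open MvPolynomial

abbrev R3 : Type := MvPolynomial (Fin 3) ℂ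

def chi : R3 :=
  C (484/49) * (C 50000 * (X 1) ^ 6 - C 1000 * (X 0) ^ 2 * X 2 * (X 1) ^ 4
    + (X 0) ^ 5 * (X 1) ^ 4 - C 2 * (X 0) ^ 4 * (X 2) ^ 2 * (X 1) ^ 2
    + C 1800 * X 0 * (X 2) ^ 3 * (X 1) ^ 2 + (X 0) ^ 3 * (X 2) ^ 4 - C 864 * (X 2) ^ 5)

/-- The relation `W² - χ` inside `ℂ[X, Y, Z, W]`. -/
def relIdeal : Ideal (MvPolynomial (Fin 4) ℂ) :=
  Ideal.span {(X 3) ^ 2 - (rename Fin.castSucc chi)}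

/-- `T = ℂ[X, Y, Z, W]/(W² - χ)`. -/
abbrev T : Type := MvPolynomial (Fin 4) ℂ ⧸ relIdeal

def mkT : MvPolynomial (Fin 4) ℂ →ₐ[ℂ] T := Ideal.Quotient.mkₐ ℂ relIdeal

def xT : T := mkT (X 0)
def yT : T := mkT (X 1)
def zT : T := mkT (X 2)
/-- `w`, the class of `W` in `T`. -/
def wT : T := mkT (X 3)

/-- The canonical map `ℂ[X, Y, Z] → T`. -/
def toT : R3 →ₐ[ℂ] T := mkT.comp (rename Fin.castSucc)

/-- The structure map `ℂ → T`. -/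
def CT : ℂ → T := algebraMap ℂ T

section Involution

variable {A : Type*} [CommRing A] {σ : A →+* A} {s : Set A} {w : A}

theorem involutive_of_forall_eq_add_mul (hs : ∀ a ∈ s, σ a = a) (hw : σ w = -w)
    (hdecomp : ∀ t, ∃ a ∈ s, ∃ b ∈ s, t = a + b * w) : Function.Involutive σ := by
  intro t
  obtain ⟨a, ha, b, hb, rfl⟩ := hdecomp t
  simp only [map_add, map_mul, hs a ha, hs b hb, hw, map_neg, neg_neg]

theorem Ideal.span_inter_le_inf_map (hs : ∀ a ∈ s, σ a = a) (Q : Ideal A) :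
    Ideal.span ((Q : Set A) ∩ s) ≤ Q ⊓ Q.map σ := by
  rw [Ideal.span_le]
  rintro a ⟨haQ, ha⟩
  exact ⟨haQ, hs a ha ▸ Ideal.mem_map_of_mem σ haQ⟩

theorem Ideal.inf_map_le_span_inter (h2 : IsUnit (2 : A)) (hs : ∀ a ∈ s, σ a = a)
    (hw : σ w = -w) (hdecomp : ∀ t, ∃ a ∈ s, ∃ b ∈ s, t = a + b * w)
    (Q : Ideal A) [Q.IsPrime] (hwQ : w ∉ Q) :
    Q ⊓ Q.map σ ≤ Ideal.span ((Q : Set A) ∩ s) := by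
  rintro t ⟨htQ, htσ⟩
  have hσt : σ t ∈ Q :=
    Ideal.map_le_comap_of_inverse (f := σ) σ Q (involutive_of_forall_eq_add_mul hs hw hdecomp) htσ
  obtain ⟨a, ha, b, hb, rfl⟩ := hdecomp t
  have hσ : σ (a + b * w) = a - b * w := by
    rw [map_add, map_mul, hs a ha, hs b hb, hw]; ring
  rw [hσ] at hσt
  have haQ : a ∈ Q := by
    rw [← Ideal.unit_mul_mem_iff_mem Q h2]
    convert Q.add_mem htQ hσt using 1; ring
  have hbQ : b ∈ Q := by
    have hbwQ : b * w ∈ Q := by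
      rw [← Ideal.unit_mul_mem_iff_mem Q h2]
      convert Q.sub_mem htQ hσt using 1; ring
    exact (Ideal.IsPrime.mem_or_mem ‹_› hbwQ).resolve_right hwQ
  exact Ideal.add_mem _ (Ideal.subset_span ⟨haQ, ha⟩)
    (Ideal.mul_mem_right _ _ (Ideal.subset_span ⟨hbQ, hb⟩))

theorem Ideal.inf_map_eq_span_inter (h2 : IsUnit (2 : A)) (hs : ∀ a ∈ s, σ a = a)
    (hw : σ w = -w) (hdecomp : ∀ t, ∃ a ∈ s, ∃ b ∈ s, t = a + b * w)
    (Q : Ideal A) [Q.IsPrime] (hwQ : w ∉ Q) :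
    Q ⊓ Q.map σ = Ideal.span ((Q : Set A) ∩ s) :=
  le_antisymm (Q.inf_map_le_span_inter h2 hs hw hdecomp hwQ) (Q.span_inter_le_inf_map hs)

end Involution

lemma toT_X (j : Fin 3) : toT (X j) = mkT (X j.castSucc) := by
  simp [toT, rename_X]

lemma wT_mul_self : wT * wT = toT chi := by
  have hrel : (X 3 : MvPolynomial (Fin 4) ℂ) ^ 2 - rename Fin.castSucc chi ∈ relIdeal :=
    Ideal.subset_span rfl
  simpa [wT, toT, mkT, ← sq] using (Ideal.Quotient.eq (I := relIdeal)).2 hrel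

lemma exists_eq_toT_add_toT_mul_wT (t : T) : ∃ a b : R3, t = toT a + toT b * wT := by
  obtain ⟨p, rfl⟩ := Ideal.Quotient.mkₐ_surjective ℂ relIdeal t
  change ∃ a b : R3, mkT p = toT a + toT b * wT
  induction p using MvPolynomial.induction_on with
  | C c => exact ⟨C c, 0, by simp [toT, mkT]⟩
  | add p q hp hq =>
    obtain ⟨a₁, b₁, h₁⟩ := hp
    obtain ⟨a₂, b₂, h₂⟩ := hq
    exact ⟨a₁ + a₂, b₁ + b₂, by rw [map_add, h₁, h₂, map_add, map_add]; ring⟩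
  | mul_X p i hp =>
    obtain ⟨a, b, h⟩ := hp
    induction i using Fin.lastCases with
    | last =>
      refine ⟨b * chi, a, ?_⟩
      rw [map_mul, h, map_mul, ← wT_mul_self]
      change _ * wT = _
      ring
    | cast j =>
      refine ⟨a * X j, b * X j, ?_⟩
      rw [map_mul, h, map_mul, map_mul, toT_X]
      ring

lemma AlgHom.apply_toT_of_fixes (ι : T →ₐ[ℂ] T) (hx : ι xT = xT) (hy : ι yT = yT)
    (hz : ι zT = zT) (p : R3) : ι (toT p) = toT p := by
  have hcomp : ι.comp toT = toT := by
    refine MvPolynomial.algHom_ext fun i => ?_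
    fin_cases i
    · simpa [toT_X, xT] using hx
    · simpa [toT_X, yT] using hy
    · simpa [toT_X, zT] using hz
  exact AlgHom.congr_fun hcomp p

lemma isUnit_two_T : IsUnit (2 : T) := by
  simpa only [map_ofNat] using (isUnit_of_invertible (2 : ℂ)).map (algebraMap ℂ T)

theorem inf_involution_eq_span_inter_general
    (ι : T →ₐ[ℂ] T) (hx : ι xT = xT) (hy : ι yT = yT) (hz : ι zT = zT) (hw : ι wT = -wT)
    (Q : Ideal T) (hQ : Q.IsPrime) (hwQ : wT ∉ Q) :
    Q ⊓ Q.map ι.toRingHom = Ideal.span ((Q : Set T) ∩ Set.range ⇑toT) := by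
  refine Q.inf_map_eq_span_inter isUnit_two_T ?_ hw ?_ hwQ
  · rintro _ ⟨p, rfl⟩
    exact ι.apply_toT_of_fixes hx hy hz p
  · intro t
    obtain ⟨a, b, rfl⟩ := exists_eq_toT_add_toT_mul_wT t
    exact ⟨_, ⟨a, rfl⟩, _, ⟨b, rfl⟩, rfl⟩

/-- If `Q` is a nonzero prime ideal of `T = ℂ[X, Y, Z, W]/(W² - χ)` not
containing `w`, and `P = Q ∩ T*` where `T*` is the image of `ℂ[X, Y, Z]` in `T`, then
`Q ∩ ι(Q) = P·T`. -/
theorem inf_involution_eq_span_inter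
    (ι : T →ₐ[ℂ] T) (hx : ι xT = xT) (hy : ι yT = yT) (hz : ι zT = zT) (hw : ι wT = -wT)
    (Q : Ideal T) (hQ : Q.IsPrime) (hQ0 : Q ≠ ⊥) (hwQ : wT ∉ Q) :
    Q ⊓ Q.map ι.toRingHom = Ideal.span ((Q : Set T) ∩ Set.range ⇑toT) :=
  inf_involution_eq_span_inter_general ι hx hy hz hw Q hQ hwQ
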